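/- arXiv:1705.07268 — 2 statements merged into one kernel-verified Lean document; each statement's English description precedes it below -/
import Mathlib

section
/- The map x ↦ J·xᵀ·J⁻¹ on M_{2n}(F) maps the field K = F[β] into itself, its restriction τ to K is an F-algebra automorphism of K with τ(β) = −β, and τ has order exactly 2. -/
/-!
Since `Jᵀ = -J`, the map `σ x = J xᵀ J⁻¹` (the adjoint for the symplectic form) is an involutive
anti-automorphism of the matrix algebra, and `β ∈ sp_{2n}` says precisely that `σ β = -β`.
Hence `σ` preserves `F[β]`, and as `F[β]` is commutative, reversing products is harmless there:
`σ` restricts to an involutive algebra automorphism `τ`. Finally `τ ≠ id` because `-β ≠ β`: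
`2 ≠ 0`, and `β ≠ 0` since the characteristic polynomial of `0`, namely `X ^ (2n)`, is reducible.
-/

open Matrix

/-- The matrix `J = [[0, I'ₙ],[−I'ₙ, 0]]` where `I'ₙ` is the antidiagonal identity. -/
def Jmat (R : Type*) [CommRing R] (n : ℕ) : Matrix (Fin (2*n)) (Fin (2*n)) R :=
  Matrix.of fun i j =>
    if (i : ℕ) + (j : ℕ) = 2*n - 1 then (if (i : ℕ) < n then (1 : R) else -1) else 0

/-- The symplectic group `Sp_{2n}(R)` as a set of matrices. -/
def SpSet (n : ℕ) (R : Type*) [CommRing R] : Set (Matrix (Fin (2*n)) (Fin (2*n)) R) :=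
  {g | IsUnit g.det ∧ g * Jmat R n * gᵀ = Jmat R n}

/-- The symplectic Lie algebra `sp_{2n}(R)` as a set of matrices. -/
def spSet (n : ℕ) (R : Type*) [CommRing R] : Set (Matrix (Fin (2*n)) (Fin (2*n)) R) :=
  {X | X * Jmat R n + Jmat R n * Xᵀ = 0}

noncomputable section FormAdjoint

variable {m R : Type*} [Fintype m] [DecidableEq m] [CommRing R]

/-- The adjoint of `x` for the bilinear form with Gram matrix `J⁻¹`. -/
def formAdjoint (J x : Matrix m m R) : Matrix m m R := J * xᵀ * J⁻¹

variable {J : Matrix m m R}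

lemma formAdjoint_mul (hJ : IsUnit J.det) (x y : Matrix m m R) :
    formAdjoint J (x * y) = formAdjoint J y * formAdjoint J x := by
  simp only [formAdjoint, transpose_mul, mul_assoc, nonsing_inv_mul_cancel_left _ _ hJ]

lemma formAdjoint_add (x y : Matrix m m R) :
    formAdjoint J (x + y) = formAdjoint J x + formAdjoint J y := by
  simp only [formAdjoint, transpose_add, mul_add, add_mul]

lemma formAdjoint_algebraMap (hJ : IsUnit J.det) (r : R) :
    formAdjoint J (algebraMap R (Matrix m m R) r) = algebraMap R (Matrix m m R) r := by
  rw [formAdjoint, Algebra.algebraMap_eq_smul_one, transpose_smul, transpose_one,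
    mul_smul_comm, mul_one, smul_mul_assoc, mul_nonsing_inv _ hJ]

lemma formAdjoint_formAdjoint (hJ : IsUnit J.det) (hJt : Jᵀ = -J) (x : Matrix m m R) :
    formAdjoint J (formAdjoint J x) = x := by
  have hJt_inv : (J⁻¹)ᵀ = -J⁻¹ := by
    rw [transpose_nonsing_inv, hJt]
    exact inv_eq_left_inv (by rw [neg_mul_neg, nonsing_inv_mul _ hJ])
  simp only [formAdjoint, transpose_mul, transpose_transpose, hJt_inv, hJt, mul_neg, neg_mul,
    neg_neg, mul_assoc, mul_nonsing_inv_cancel_left _ _ hJ, mul_nonsing_inv _ hJ, mul_one]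

lemma formAdjoint_eq_neg (hJ : IsUnit J.det) {X : Matrix m m R} (hX : X * J + J * Xᵀ = 0) :
    formAdjoint J X = -X := by
  rw [formAdjoint, eq_neg_of_add_eq_zero_right hX, neg_mul, mul_nonsing_inv_cancel_right _ _ hJ]

variable {β : Matrix m m R}

lemma formAdjoint_mem_adjoin_singleton (hJ : IsUnit J.det)
    (hβ : formAdjoint J β ∈ Algebra.adjoin R {β}) {x : Matrix m m R}
    (hx : x ∈ Algebra.adjoin R {β}) : formAdjoint J x ∈ Algebra.adjoin R {β} := by
  induction hx using Algebra.adjoin_induction with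
  | mem y hy => rwa [Set.mem_singleton_iff.mp hy]
  | algebraMap r => rw [formAdjoint_algebraMap hJ]; exact Subalgebra.algebraMap_mem _ r
  | add y z _ _ hy hz => rw [formAdjoint_add]; exact add_mem hy hz
  | mul y z _ _ hy hz => rw [formAdjoint_mul hJ]; exact mul_mem hz hy

def formAdjointAlgHom (hJ : IsUnit J.det) (hβ : formAdjoint J β ∈ Algebra.adjoin R {β}) :
    Algebra.adjoin R {β} →ₐ[R] Algebra.adjoin R {β} where
  toFun x := ⟨formAdjoint J x, formAdjoint_mem_adjoin_singleton hJ hβ x.2⟩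
  map_one' := Subtype.ext <| by simpa using formAdjoint_algebraMap hJ 1
  -- `formAdjoint J` reverses products, which is harmless since `R[β]` is commutative
  map_mul' x y := Subtype.ext <| (formAdjoint_mul hJ x y).trans <|
    Algebra.commute_of_mem_adjoin_singleton_of_commute
      (formAdjoint_mem_adjoin_singleton hJ hβ x.2)
      (Algebra.commute_of_mem_adjoin_self (formAdjoint_mem_adjoin_singleton hJ hβ y.2)).symm
  map_zero' := Subtype.ext <| by simp [formAdjoint]
  map_add' x y := Subtype.ext <| formAdjoint_add _ _
  commutes' r := Subtype.ext <| formAdjoint_algebraMap hJ r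

lemma formAdjointAlgHom_comp_self (hJ : IsUnit J.det) (hJt : Jᵀ = -J)
    (hβ : formAdjoint J β ∈ Algebra.adjoin R {β}) :
    (formAdjointAlgHom hJ hβ).comp (formAdjointAlgHom hJ hβ) = AlgHom.id R _ :=
  AlgHom.ext fun x => Subtype.ext <| formAdjoint_formAdjoint hJ hJt x

def formAdjointAlgEquiv (hJ : IsUnit J.det) (hJt : Jᵀ = -J)
    (hβ : formAdjoint J β ∈ Algebra.adjoin R {β}) :
    Algebra.adjoin R {β} ≃ₐ[R] Algebra.adjoin R {β} :=
  AlgEquiv.ofAlgHom _ _ (formAdjointAlgHom_comp_self hJ hJt hβ)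
    (formAdjointAlgHom_comp_self hJ hJt hβ)

end FormAdjoint

section Jmat

variable {R : Type*} [CommRing R] {n : ℕ}

lemma Jmat_apply (i j : Fin (2*n)) :
    Jmat R n i j = if j = i.rev then (if (i : ℕ) < n then 1 else -1) else 0 := by
  have h : (i : ℕ) + j = 2*n - 1 ↔ j = i.rev := by rw [Fin.ext_iff, Fin.val_rev]; omega
  simp only [Jmat, of_apply, h]

lemma Jmat_apply_rev (i : Fin (2*n)) : Jmat R n i.rev i = -Jmat R n i i.rev := by
  have h : (i.rev : ℕ) < n ↔ ¬ (i : ℕ) < n := by rw [Fin.val_rev]; omega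
  simp only [Jmat_apply, Fin.rev_rev, if_true, h]
  split_ifs <;> simp

lemma Jmat_transpose : (Jmat R n)ᵀ = -Jmat R n := by
  ext i j
  rw [transpose_apply, neg_apply]
  obtain rfl | hij := eq_or_ne i j.rev
  · rw [Jmat_apply_rev, neg_neg]
  · rw [Jmat_apply, Jmat_apply, if_neg hij, if_neg fun h => hij (by rw [h, Fin.rev_rev]), neg_zero]

lemma Jmat_mul_self : Jmat R n * Jmat R n = -1 := by
  ext i j
  rw [mul_apply, Fintype.sum_eq_single i.rev, neg_apply]
  · obtain rfl | hij := eq_or_ne j i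
    · rw [Jmat_apply_rev, one_apply_eq, Jmat_apply, if_pos rfl]
      split_ifs <;> simp
    · rw [Jmat_apply i.rev, Fin.rev_rev, if_neg hij, mul_zero, one_apply_ne hij.symm, neg_zero]
  · intro k hk
    rw [Jmat_apply i k, if_neg hk, zero_mul]

lemma isUnit_det_Jmat : IsUnit (Jmat R n).det :=
  isUnit_det_of_right_inverse (B := -Jmat R n) (by rw [mul_neg, Jmat_mul_self, neg_neg])

lemma formAdjoint_Jmat_of_mem_spSet {X : Matrix (Fin (2*n)) (Fin (2*n)) R}
    (hX : X ∈ spSet n R) : formAdjoint (Jmat R n) X = -X :=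
  formAdjoint_eq_neg isUnit_det_Jmat hX

end Jmat

lemma Matrix.ne_zero_of_irreducible_charpoly {m K : Type*} [Fintype m] [DecidableEq m]
    [CommRing K] (hm : Fintype.card m ≠ 1) {M : Matrix m m K} (hM : Irreducible M.charpoly) :
    M ≠ 0 := by
  rintro rfl
  rw [charpoly_zero] at hM
  exact not_irreducible_pow hm hM

theorem stmt3_general (n : ℕ) (F : Type*) [Field F] (h2 : (2 : F) ≠ 0)
    (β : Matrix (Fin (2*n)) (Fin (2*n)) F) (hβ : β ∈ spSet n F)
    (hirr : Irreducible β.charpoly) :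
    (∀ x ∈ Algebra.adjoin F {β},
        Jmat F n * xᵀ * (Jmat F n)⁻¹ ∈ Algebra.adjoin F {β}) ∧
    ∃ τ : ↥(Algebra.adjoin F {β}) ≃ₐ[F] ↥(Algebra.adjoin F {β}),
      (∀ x : ↥(Algebra.adjoin F {β}),
          (τ x : Matrix (Fin (2*n)) (Fin (2*n)) F)
            = Jmat F n * (x : Matrix (Fin (2*n)) (Fin (2*n)) F)ᵀ * (Jmat F n)⁻¹) ∧
      (τ ⟨β, Algebra.subset_adjoin rfl⟩ : Matrix (Fin (2*n)) (Fin (2*n)) F) = -β ∧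
      (∀ x, τ (τ x) = x) ∧ τ ≠ AlgEquiv.refl := by
  have hβ' : formAdjoint (Jmat F n) β = -β := formAdjoint_Jmat_of_mem_spSet hβ
  have hβmem : formAdjoint (Jmat F n) β ∈ Algebra.adjoin F {β} :=
    hβ' ▸ neg_mem (Algebra.self_mem_adjoin_singleton F β)
  refine ⟨fun _ => formAdjoint_mem_adjoin_singleton isUnit_det_Jmat hβmem,
    formAdjointAlgEquiv isUnit_det_Jmat Jmat_transpose hβmem, fun x => rfl, hβ',
    AlgHom.congr_fun (formAdjointAlgHom_comp_self isUnit_det_Jmat Jmat_transpose hβmem), ?_⟩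
  intro hτ
  have hneg : -β = β := hβ'.symm.trans <| congrArg Subtype.val <|
    AlgEquiv.congr_fun hτ ⟨β, Algebra.self_mem_adjoin_singleton F β⟩
  have hβ0 : β ≠ 0 := ne_zero_of_irreducible_charpoly (by rw [Fintype.card_fin]; omega) hirr
  rw [neg_eq_iff_add_eq_zero, ← two_smul F, smul_eq_zero] at hneg
  exact hβ0 (hneg.resolve_left h2)

/-- The map `x ↦ J·xᵀ·J⁻¹` maps `K = F[β]` into itself, restricts to an `F`-algebra
automorphism `τ` of `K` with `τ(β) = -β`, and `τ` has order exactly `2`. -/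
theorem stmt3 (n : ℕ) (hn : 1 ≤ n) (F : Type*) [Field F] (h2 : (2 : F) ≠ 0)
    (β : Matrix (Fin (2*n)) (Fin (2*n)) F) (hβ : β ∈ spSet n F)
    (hirr : Irreducible β.charpoly) :
    (∀ x ∈ Algebra.adjoin F {β},
        Jmat F n * xᵀ * (Jmat F n)⁻¹ ∈ Algebra.adjoin F {β}) ∧
    ∃ τ : ↥(Algebra.adjoin F {β}) ≃ₐ[F] ↥(Algebra.adjoin F {β}),
      (∀ x : ↥(Algebra.adjoin F {β}),
          (τ x : Matrix (Fin (2*n)) (Fin (2*n)) F)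
            = Jmat F n * (x : Matrix (Fin (2*n)) (Fin (2*n)) F)ᵀ * (Jmat F n)⁻¹) ∧
      (τ ⟨β, Algebra.subset_adjoin rfl⟩ : Matrix (Fin (2*n)) (Fin (2*n)) F) = -β ∧
      (∀ x, τ (τ x) = x) ∧ τ ≠ AlgEquiv.refl :=
  stmt3_general n F h2 β hβ hirr
end

section
/- Let r > 1 and write r = l + l' with l the smallest integer such that 0 < l' ≤ l, let β̄ denote the reduction of β modulo ϖ^r, and set H_r = {h ∈ Sp_{2n}(O/ϖ^r O) : h·β̄ ≡ β̄·h (mod ϖ^{l'})}. Then for every g ∈ Sp_{2n}(O/ϖ^r O), the intersection U(O/ϖ^r O) ∩ g·H_r·g⁻¹ equals {u ∈ U(O/ϖ^r O) : u ≡ 1_{2n} (mod ϖ^{l'})}. -/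
/-!
An element `u = g h g⁻¹` of the left-hand side commutes modulo `ϖ^{l'}` with `B = g β̄ g⁻¹`, whose
characteristic polynomial is irreducible modulo `ϖ`. If `u ≡ 1 (mod ϖ^k)` with `k < l'`, lift and
write `u - 1 = ϖ^k X`: the reduction `X̄` of `X` modulo `ϖ` commutes with `B̄` and is strictly upper
triangular, hence singular. Over a field, a matrix with irreducible characteristic polynomial
makes every nonzero vector cyclic, so a singular matrix commuting with it kills a cyclic vector and
vanishes; thus `X̄ = 0` and `u ≡ 1 (mod ϖ^{k+1})`. Conversely, if `u ≡ 1 (mod ϖ^{l'})` then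
`h = g⁻¹ u g ≡ 1` commutes with `β̄` modulo `ϖ^{l'}`.
-/

open Matrix

/-- `U(R)`: upper triangular matrices in `Sp_{2n}(R)` with all diagonal entries `1`. -/
def USet (n : ℕ) (R : Type*) [CommRing R] : Set (Matrix (Fin (2*n)) (Fin (2*n)) R) :=
  {u | u ∈ SpSet n R ∧ (∀ a b : Fin (2*n), (b : ℕ) < (a : ℕ) → u a b = 0) ∧
    ∀ a : Fin (2*n), u a a = 1}

open Polynomial

theorem Module.End.eq_zero_of_commute_of_ker_ne_bot {K V : Type*} [Field K] [AddCommGroup V]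
    [Module K V] [FiniteDimensional K V] {f g : Module.End K V} (hf : Irreducible f.charpoly)
    (hfg : Commute f g) (hg : LinearMap.ker g ≠ ⊥) : g = 0 := by
  obtain ⟨v, hv, hv0⟩ := Submodule.exists_mem_ne_zero_of_ne_bot hg
  set d := Module.finrank K V
  -- a nonzero `p` of degree `< d` is coprime to the irreducible `f.charpoly` of degree `d`
  have hinj : ∀ p ∈ degreeLT K d, aeval f p v = 0 → p = 0 := by
    intro p hp hpv
    by_contra hp0
    have hndvd : ¬ f.charpoly ∣ p := fun hdvd => by
      have := natDegree_le_of_dvd hdvd hp0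
      rw [LinearMap.charpoly_natDegree] at this
      have := (natDegree_lt_iff_degree_lt hp0).mpr (mem_degreeLT.mp hp)
      omega
    obtain ⟨a, b, hab⟩ := (hf.coprime_iff_not_dvd.mpr hndvd)
    have := congrArg (fun q => aeval f q v) hab
    simp only [map_add, map_mul, LinearMap.aeval_self_charpoly, mul_zero, zero_add,
      Module.End.mul_apply, hpv, map_zero, map_one, Module.End.one_apply] at this
    exact hv0 this.symm
  let ψ : degreeLT K d →ₗ[K] V :=
    LinearMap.applyₗ v ∘ₗ (aeval f).toLinearMap ∘ₗ (degreeLT K d).subtype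
  have hψ : Function.Surjective ψ := by
    rw [← LinearMap.injective_iff_surjective_of_finrank_eq_finrank
      ((degreeLTEquiv K d).finrank_eq.trans (Module.finrank_fin_fun K)),
      injective_iff_map_eq_zero]
    exact fun p hp => Subtype.ext (hinj p p.2 hp)
  ext w
  obtain ⟨p, rfl⟩ := hψ w
  have hcomm : Commute g (aeval f (p : K[X])) :=
    Algebra.commute_of_mem_adjoin_singleton_of_commute (aeval_mem_adjoin_singleton K f) hfg.symm
  change g (aeval f (p : K[X]) v) = 0
  rw [← Module.End.mul_apply, hcomm.eq, Module.End.mul_apply, LinearMap.mem_ker.mp hv, map_zero]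

theorem Matrix.eq_zero_of_commute_of_det_eq_zero {K n : Type*} [Field K] [Fintype n] [DecidableEq n]
    {B X : Matrix n n K} (hB : Irreducible B.charpoly) (hBX : Commute B X) (hX : X.det = 0) :
    X = 0 := by
  obtain ⟨v, hv0, hXv⟩ := exists_mulVec_eq_zero_iff.mpr hX
  rw [← toLin'.injective.eq_iff, map_zero]
  refine Module.End.eq_zero_of_commute_of_ker_ne_bot (f := toLin' B) (by rwa [charpoly_toLin'])
    (hBX.map toLinAlgEquiv') ?_
  exact (Submodule.ne_bot_iff _).mpr ⟨v, hXv, hv0⟩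

section CongruenceModIdeal

variable {R n : Type*} [CommRing R] [Fintype n] [DecidableEq n] {I : Ideal R}

theorem Ideal.Quotient.mapMatrix_mk_eq_zero_iff {M : Matrix n n R} :
    (Ideal.Quotient.mk I).mapMatrix M = 0 ↔ ∀ i j, M i j ∈ I := by
  simp [← Matrix.ext_iff, Ideal.Quotient.eq_zero_iff_mem]

theorem Matrix.commute_mod_conj {g h B : Matrix n n R} (hg : IsUnit g.det)
    (hh : ∀ i j, (h * B - B * h) i j ∈ I) :
    ∀ i j, (g * h * g⁻¹ * (g * B * g⁻¹) - g * B * g⁻¹ * (g * h * g⁻¹)) i j ∈ I := by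
  rw [← Ideal.Quotient.mapMatrix_mk_eq_zero_iff] at hh ⊢
  have : g * h * g⁻¹ * (g * B * g⁻¹) - g * B * g⁻¹ * (g * h * g⁻¹) =
      g * (h * B - B * h) * g⁻¹ := by
    simp only [Matrix.mul_assoc, nonsing_inv_mul_cancel_left _ _ hg, mul_sub, sub_mul]
  rw [this, map_mul, map_mul, hh, mul_zero, zero_mul]

theorem Matrix.conj_sub_one_mem {g u : Matrix n n R} (hg : IsUnit g.det)
    (hu : ∀ i j, (u - 1) i j ∈ I) : ∀ i j, (g⁻¹ * u * g - 1) i j ∈ I := by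
  rw [← Ideal.Quotient.mapMatrix_mk_eq_zero_iff] at hu ⊢
  rw [show g⁻¹ * u * g - 1 = g⁻¹ * (u - 1) * g by
    rw [mul_sub_one, sub_mul, nonsing_inv_mul _ hg], map_mul, map_mul, hu, mul_zero, zero_mul]

theorem Matrix.commute_mod_of_sub_one_mem {u : Matrix n n R} (hu : ∀ i j, (u - 1) i j ∈ I)
    (B : Matrix n n R) : ∀ i j, (u * B - B * u) i j ∈ I := by
  rw [← Ideal.Quotient.mapMatrix_mk_eq_zero_iff, map_sub, map_one, sub_eq_zero] at hu
  rw [← Ideal.Quotient.mapMatrix_mk_eq_zero_iff, map_sub, map_mul, map_mul, hu, one_mul, mul_one,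
    sub_self]

end CongruenceModIdeal

theorem Matrix.charpoly_map_conj {R S n : Type*} [CommRing R] [CommRing S] [Fintype n]
    [DecidableEq n] (f : R →+* S) {g : Matrix n n R} (hg : IsUnit g.det) (A : Matrix n n R) :
    ((g * A * g⁻¹).map f).charpoly = (A.map f).charpoly := by
  have hinv : g.map f * g⁻¹.map f = 1 := by
    rw [← Matrix.map_mul, mul_nonsing_inv _ hg, Matrix.map_one _ (map_zero f) (map_one f)]
  have := charpoly_units_conj ⟨g.map f, g⁻¹.map f, hinv, mul_eq_one_comm.mp hinv⟩ (A.map f)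
  rwa [Units.val_mk, inv_eq_right_inv hinv, ← Matrix.map_mul, ← Matrix.map_mul] at this

theorem Matrix.mem_of_commute_mod_of_mem_lower {R n : Type*} [CommRing R] [Fintype n]
    [DecidableEq n] [LinearOrder n] {𝔪 : Ideal R} [𝔪.IsMaximal] {B X : Matrix n n R}
    (hB : Irreducible (B.map (Ideal.Quotient.mk 𝔪)).charpoly)
    (hcomm : ∀ i j, (X * B - B * X) i j ∈ 𝔪) (hlower : ∀ i j, j ≤ i → X i j ∈ 𝔪) (i j : n) :
    X i j ∈ 𝔪 := by
  let := Ideal.Quotient.field 𝔪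
  set π := (Ideal.Quotient.mk 𝔪).mapMatrix (m := n)
  have hXB : Commute (π B) (π X) := by
    rw [← Ideal.Quotient.mapMatrix_mk_eq_zero_iff, map_sub, map_mul, map_mul, sub_eq_zero] at hcomm
    exact hcomm.symm
  have hdet : (π X).det = 0 := by
    rw [det_of_isUpperTriangular (M := π X) fun a b hba => Ideal.Quotient.eq_zero_iff_mem.mpr
      (hlower a b hba.le)]
    exact Finset.prod_eq_zero (Finset.mem_univ i)
      (Ideal.Quotient.eq_zero_iff_mem.mpr (hlower i i le_rfl))
  have := eq_zero_of_commute_of_det_eq_zero hB hXB hdet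
  exact Ideal.Quotient.mapMatrix_mk_eq_zero_iff.mp this i j

theorem dvd_of_pow_dvd_pow_mul {R : Type*} [CommRing R] [IsDomain R] {a b : R} (ha : a ≠ 0)
    {k s : ℕ} (hks : k < s) (h : a ^ s ∣ a ^ k * b) : a ∣ b := by
  rw [← Nat.add_sub_cancel' hks.le, pow_add, mul_dvd_mul_iff_left (pow_ne_zero k ha)] at h
  exact (dvd_pow_self a (by omega)).trans h

theorem Matrix.pow_dvd_of_commute_mod {O n : Type*} [CommRing O] [IsDomain O]
    [IsPrincipalIdealRing O] [Fintype n] [DecidableEq n] [LinearOrder n] {ϖ : O}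
    (hϖ : Irreducible ϖ) {B D : Matrix n n O}
    (hB : Irreducible (B.map (Ideal.Quotient.mk (Ideal.span {ϖ}))).charpoly) {s : ℕ}
    (hcomm : ∀ i j, ϖ ^ s ∣ (D * B - B * D) i j) (hlower : ∀ i j, j ≤ i → ϖ ^ s ∣ D i j) :
    ∀ i j, ϖ ^ s ∣ D i j := by
  have := PrincipalIdealRing.isMaximal_of_irreducible hϖ
  suffices ∀ k ≤ s, ∀ i j, ϖ ^ k ∣ D i j from this s le_rfl
  intro k hk
  induction k with
  | zero => simp
  | succ k ih =>
    obtain ⟨X, rfl⟩ : ∃ X : Matrix n n O, D = ϖ ^ k • X := by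
      choose X hX using ih (by omega)
      exact ⟨Matrix.of X, by ext i j; exact hX i j⟩
    have hXmod : ∀ i j, (X * B - B * X) i j ∈ Ideal.span {ϖ} := fun i j => by
      refine Ideal.mem_span_singleton.mpr (dvd_of_pow_dvd_pow_mul hϖ.ne_zero hk ?_)
      simpa only [Matrix.smul_mul, Matrix.mul_smul, ← smul_sub, smul_apply, smul_eq_mul]
        using hcomm i j
    have hXlower : ∀ i j, j ≤ i → X i j ∈ Ideal.span {ϖ} := fun i j hji =>
      Ideal.mem_span_singleton.mpr (dvd_of_pow_dvd_pow_mul hϖ.ne_zero hk (hlower i j hji))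
    intro i j
    rw [smul_apply, smul_eq_mul, pow_succ]
    exact mul_dvd_mul_left _ (Ideal.mem_span_singleton.mp
      (mem_of_commute_mod_of_mem_lower hB hXmod hXlower i j))

theorem Function.Surjective.matrix_map {α β m n : Type*} {f : α → β} (hf : Function.Surjective f) :
    Function.Surjective fun M : Matrix m n α => M.map f :=
  fun M => ⟨M.map (Function.surjInv hf), by ext; simp [Function.surjInv_eq hf]⟩

theorem Ideal.Quotient.mk_mem_span_mk_pow_iff {O : Type*} [CommRing O] {ϖ : O} {r s : ℕ}
    (hsr : s ≤ r) {a : O} :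
    Ideal.Quotient.mk (Ideal.span {ϖ ^ r}) a ∈
      Ideal.span {Ideal.Quotient.mk (Ideal.span {ϖ ^ r}) (ϖ ^ s)} ↔ ϖ ^ s ∣ a := by
  rw [← Set.image_singleton (f := Ideal.Quotient.mk _), ← Ideal.map_span, Ideal.mem_quotient_iff_mem
    (Ideal.span_singleton_le_span_singleton.mpr (pow_dvd_pow ϖ hsr)), Ideal.mem_span_singleton]

theorem Matrix.mem_span_mk_pow_of_commute_mod {O n : Type*} [CommRing O] [IsDomain O]
    [IsPrincipalIdealRing O] [Fintype n] [DecidableEq n] [LinearOrder n] {ϖ : O}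
    (hϖ : Irreducible ϖ) {r s : ℕ} (hsr : s ≤ r) (hle : Ideal.span {ϖ ^ r} ≤ Ideal.span {ϖ})
    {B D : Matrix n n (O ⧸ Ideal.span {ϖ ^ r})}
    (hB : Irreducible (B.map (Ideal.Quotient.factor hle)).charpoly)
    (hcomm : ∀ i j, (D * B - B * D) i j ∈
      Ideal.span {Ideal.Quotient.mk (Ideal.span {ϖ ^ r}) (ϖ ^ s)})
    (hlower : ∀ i j, j ≤ i → D i j ∈ Ideal.span {Ideal.Quotient.mk (Ideal.span {ϖ ^ r}) (ϖ ^ s)}) :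
    ∀ i j, D i j ∈ Ideal.span {Ideal.Quotient.mk (Ideal.span {ϖ ^ r}) (ϖ ^ s)} := by
  obtain ⟨B, rfl⟩ := Ideal.Quotient.mk_surjective.matrix_map B
  obtain ⟨D, rfl⟩ := Ideal.Quotient.mk_surjective.matrix_map D
  rw [Matrix.map_map, ← RingHom.coe_comp, Ideal.Quotient.factor_comp_mk] at hB
  beta_reduce at hcomm hlower ⊢
  simp only [← Matrix.map_mul, sub_apply, map_apply, ← map_sub,
    Ideal.Quotient.mk_mem_span_mk_pow_iff hsr] at hcomm hlower ⊢
  exact pow_dvd_of_commute_mod hϖ hB hcomm hlower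

theorem mul_mem_SpSet {n : ℕ} {R : Type*} [CommRing R] {a b : Matrix (Fin (2*n)) (Fin (2*n)) R}
    (ha : a ∈ SpSet n R) (hb : b ∈ SpSet n R) : a * b ∈ SpSet n R := by
  refine ⟨by rw [det_mul]; exact ha.1.mul hb.1, ?_⟩
  rw [transpose_mul, show a * b * Jmat R n * (bᵀ * aᵀ) = a * (b * Jmat R n * bᵀ) * aᵀ by
    simp only [Matrix.mul_assoc], hb.2, ha.2]

theorem nonsing_inv_mem_SpSet {n : ℕ} {R : Type*} [CommRing R]
    {a : Matrix (Fin (2*n)) (Fin (2*n)) R} (ha : a ∈ SpSet n R) : a⁻¹ ∈ SpSet n R := by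
  refine ⟨isUnit_nonsing_inv_det a ha.1, ?_⟩
  conv_lhs => rw [← ha.2]
  rw [transpose_nonsing_inv, Matrix.mul_assoc, Matrix.mul_assoc, mul_nonsing_inv _
    (by rw [det_transpose]; exact ha.1), Matrix.mul_one, ← Matrix.mul_assoc, nonsing_inv_mul _ ha.1,
    Matrix.one_mul]

theorem sub_one_apply_eq_zero_of_mem_USet {n : ℕ} {R : Type*} [CommRing R]
    {u : Matrix (Fin (2*n)) (Fin (2*n)) R} (hu : u ∈ USet n R) {i j : Fin (2*n)} (hji : j ≤ i) :
    (u - 1) i j = 0 := by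
  obtain ⟨-, hlower, hdiag⟩ := hu
  rcases hji.lt_or_eq with hji | rfl
  · rw [Matrix.sub_apply, hlower i j hji, one_apply_ne hji.ne', sub_zero]
  · rw [Matrix.sub_apply, hdiag, one_apply_eq, sub_self]

theorem stmt16_general (n : ℕ)
    (O : Type*) [CommRing O] [IsDomain O] [IsDiscreteValuationRing O]
    (ϖ : O) (hϖ : Irreducible ϖ)
    (β : Matrix (Fin (2*n)) (Fin (2*n)) O)
    (hirr : Irreducible (β.charpoly.map (Ideal.Quotient.mk (Ideal.span {ϖ}))))
    (r l l' : ℕ) (hr : 1 < r) (hrll : r = l + l') :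
    ∀ g ∈ SpSet n (O ⧸ Ideal.span {ϖ^r}),
      USet n (O ⧸ Ideal.span {ϖ^r}) ∩
        {x | ∃ h ∈ {h | h ∈ SpSet n (O ⧸ Ideal.span {ϖ^r}) ∧
            ∀ a b : Fin (2*n),
              (h * β.map (Ideal.Quotient.mk (Ideal.span {ϖ^r}))
                - β.map (Ideal.Quotient.mk (Ideal.span {ϖ^r})) * h) a b
                ∈ Ideal.span {Ideal.Quotient.mk (Ideal.span {ϖ^r}) (ϖ^l')}},
          x = g * h * g⁻¹}
      = {u | u ∈ USet n (O ⧸ Ideal.span {ϖ^r}) ∧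
          ∀ a b : Fin (2*n),
            (u - 1) a b ∈ Ideal.span {Ideal.Quotient.mk (Ideal.span {ϖ^r}) (ϖ^l')}} := by
  intro g hg
  have hle : Ideal.span {ϖ ^ r} ≤ Ideal.span {ϖ} :=
    Ideal.span_singleton_le_span_singleton.mpr (dvd_pow_self ϖ (by omega))
  ext u
  simp only [Set.mem_inter_iff, Set.mem_ofPred_eq]
  constructor
  · rintro ⟨hu, h, ⟨-, hh⟩, rfl⟩
    refine ⟨hu, mem_span_mk_pow_of_commute_mod hϖ (by omega) hle
      (B := g * β.map (Ideal.Quotient.mk _) * g⁻¹) ?_ ?_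
      fun i j hji => by rw [sub_one_apply_eq_zero_of_mem_USet hu hji]; exact zero_mem _⟩
    · rwa [charpoly_map_conj _ hg.1, Matrix.map_map, ← RingHom.coe_comp,
        Ideal.Quotient.factor_comp_mk, charpoly_map]
    · rw [sub_one_mul, mul_sub_one, sub_sub_sub_cancel_right]
      exact commute_mod_conj hg.1 hh
  · rintro ⟨hu, hu1⟩
    refine ⟨hu, g⁻¹ * u * g, ⟨mul_mem_SpSet (mul_mem_SpSet (nonsing_inv_mem_SpSet hg) hu.1) hg,
      commute_mod_of_sub_one_mem (conj_sub_one_mem hg.1 hu1) _⟩, ?_⟩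
    rw [Matrix.mul_assoc, mul_nonsing_inv_cancel_right _ _ hg.1,
      mul_nonsing_inv_cancel_left _ _ hg.1]

/-- For every `g ∈ Sp_{2n}(O/ϖ^r O)`, `U(O/ϖ^r O) ∩ g·H_r·g⁻¹` equals
`{u ∈ U(O/ϖ^r O) : u ≡ 1 (mod ϖ^{l'})}`. -/
theorem stmt16 (n : ℕ) (hn : 1 ≤ n)
    (O : Type*) [CommRing O] [IsDomain O] [IsDiscreteValuationRing O]
    (ϖ : O) (hϖ : Irreducible ϖ) [IsAdicComplete (Ideal.span {ϖ}) O]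
    [Finite (O ⧸ Ideal.span {ϖ})] (q : ℕ)
    (hq : Nat.card (O ⧸ Ideal.span {ϖ}) = q) (hodd : Odd q)
    (β : Matrix (Fin (2*n)) (Fin (2*n)) O) (hβ : β ∈ spSet n O)
    (hirr : Irreducible (β.charpoly.map (Ideal.Quotient.mk (Ideal.span {ϖ}))))
    (r l l' : ℕ) (hr : 1 < r) (hrll : r = l + l') (hl' : 0 < l') (hl'l : l' ≤ l)
    (hlmin : l ≤ l' + 1) :
    ∀ g ∈ SpSet n (O ⧸ Ideal.span {ϖ^r}),
      USet n (O ⧸ Ideal.span {ϖ^r}) ∩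
        {x | ∃ h ∈ {h | h ∈ SpSet n (O ⧸ Ideal.span {ϖ^r}) ∧
            ∀ a b : Fin (2*n),
              (h * β.map (Ideal.Quotient.mk (Ideal.span {ϖ^r}))
                - β.map (Ideal.Quotient.mk (Ideal.span {ϖ^r})) * h) a b
                ∈ Ideal.span {Ideal.Quotient.mk (Ideal.span {ϖ^r}) (ϖ^l')}},
          x = g * h * g⁻¹}
      = {u | u ∈ USet n (O ⧸ Ideal.span {ϖ^r}) ∧
          ∀ a b : Fin (2*n),
            (u - 1) a b ∈ Ideal.span {Ideal.Quotient.mk (Ideal.span {ϖ^r}) (ϖ^l')}} :=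
  stmt16_general n O ϖ hϖ β hirr r l l' hr hrll
end
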